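/- arXiv:1604.01514 — 8 statements merged into one kernel-verified Lean document; each statement's English description precedes it below -/
import Mathlib

section
/- For every integer g ≥ 1, the cardinality of S_+ is 2^{g−1}(2^g + 1). -/
open Complex

noncomputable section

/-- Index of the `i`-th coordinate among the first `g` coordinates of `Fin (2*g)`. -/
def idxU {g : ℕ} (i : Fin g) : Fin (2 * g) := ⟨i.1, by have := i.isLt; omega⟩

/-- Index of the `i`-th coordinate among the last `g` coordinates of `Fin (2*g)`. -/
def idxL {g : ℕ} (i : Fin g) : Fin (2 * g) := ⟨g + i.1, by have := i.isLt; omega⟩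

/-- The upper half `a_u` of a `2g`-vector. -/
def vecU {g : ℕ} (a : Fin (2 * g) → ℝ) : Fin g → ℝ := fun i => a (idxU i)

/-- The lower half `a_l` of a `2g`-vector. -/
def vecL {g : ℕ} (a : Fin (2 * g) → ℝ) : Fin g → ℝ := fun i => a (idxL i)

/-- The set `S₋` of odd half-integer characteristics. -/
def Sminus (g : ℕ) : Set (Fin (2 * g) → ℝ) :=
  {a | (∀ k, a k = 0 ∨ a k = 1 / 2) ∧
    Complex.exp (4 * Real.pi * Complex.I * ((∑ i, vecU a i * vecL a i : ℝ) : ℂ)) = -1}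

/-- The set `S₊` of even half-integer characteristics. -/
def Splus (g : ℕ) : Set (Fin (2 * g) → ℝ) :=
  {a | ∀ k, a k = 0 ∨ a k = 1 / 2} \ Sminus g

lemma zmod2_cases (z : ZMod 2) : z = 0 ∨ z = 1 := by revert z; decide

lemma fiber_ne (g : ℕ) (x : Fin g → ZMod 2) (hx : x ≠ 0) :
    (Finset.univ.filter (fun y : Fin g → ZMod 2 => ∑ i, x i * y i = 0)).card = 2 ^ (g - 1) := by
  obtain ⟨j, hj⟩ := Function.ne_iff.mp hx
  have hj' : x j ≠ 0 := by simpa using hj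
  have hxj : x j = 1 := (zmod2_cases (x j)).resolve_left hj'
  set s : Fin g → ZMod 2 := Pi.single j 1 with hs
  have hself : s + s = 0 := funext fun i => CharTwo.add_self_eq_zero _
  have key : ∀ y : Fin g → ZMod 2,
      ∑ i, x i * (y + s) i = (∑ i, x i * y i) + 1 := by
    intro y
    simp only [Pi.add_apply, mul_add, Finset.sum_add_distrib]
    congr 1
    rw [show (∑ i, x i * s i) = x j by
      rw [hs]
      simp [Pi.single_apply, mul_ite, Finset.sum_ite_eq']]
    exact hxj
  have hcard : (Finset.univ.filter (fun y : Fin g → ZMod 2 => ∑ i, x i * y i = 0)).card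
      = (Finset.univ.filter (fun y : Fin g → ZMod 2 => ∑ i, x i * y i = 1)).card := by
    apply Finset.card_bij (fun y _ => y + s)
    · intro y hy
      simp only [Finset.mem_filter, Finset.mem_univ, true_and] at hy ⊢
      rw [key, hy]; decide
    · intro y1 h1 y2 h2 h
      have := congrArg (fun z => z + s) h
      simpa [add_assoc, hself] using this
    · intro y hy
      simp only [Finset.mem_filter, Finset.mem_univ, true_and] at hy
      refine ⟨y + s, ?_, ?_⟩
      · simp only [Finset.mem_filter, Finset.mem_univ, true_and]
        rw [key, hy]; decide
      · simp [add_assoc, hself]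
  have hsplit : (Finset.univ.filter (fun y : Fin g → ZMod 2 => ∑ i, x i * y i = 0)).card
      + (Finset.univ.filter (fun y : Fin g → ZMod 2 => ¬ ∑ i, x i * y i = 0)).card
      = (Finset.univ : Finset (Fin g → ZMod 2)).card :=
    Finset.card_filter_add_card_filter_not _
  have hne : (Finset.univ.filter (fun y : Fin g → ZMod 2 => ¬ ∑ i, x i * y i = 0))
      = Finset.univ.filter (fun y : Fin g → ZMod 2 => ∑ i, x i * y i = 1) := by
    apply Finset.filter_congr
    intro y _
    rcases zmod2_cases (∑ i, x i * y i) with h | h <;> simp [h]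
  have huniv : (Finset.univ : Finset (Fin g → ZMod 2)).card = 2 ^ g := by
    simp [Finset.card_univ]
  rw [hne, ← hcard, huniv] at hsplit
  clear hcard hne
  have hg : 1 ≤ g := by
    rcases Nat.eq_zero_or_pos g with h | h
    · subst h
      exact absurd (funext fun i => i.elim0) hx
    · exact h
  have h2 : 2 ^ g = 2 * 2 ^ (g - 1) := by
    nth_rewrite 1 [show g = (g - 1) + 1 from (Nat.succ_pred_eq_of_pos hg).symm]
    rw [pow_succ']
  generalize hc : (Finset.univ.filter (fun y : Fin g → ZMod 2 => ∑ i, x i * y i = 0)).card = c at hsplit ⊢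
  clear hc
  omega

lemma key_arith (A : ℕ) (hA : 1 ≤ A) : (2 * A - 1) * A + 2 * A = A * (2 * A + 1) := by
  obtain ⟨B, rfl⟩ := Nat.exists_eq_add_of_le hA
  rw [show 2 * (1 + B) - 1 = 2 * B + 1 by omega]
  ring

lemma count_dot_zero (g : ℕ) (hg : 1 ≤ g) :
    (Finset.univ.filter (fun p : (Fin g → ZMod 2) × (Fin g → ZMod 2) =>
      ∑ i, p.1 i * p.2 i = 0)).card = 2 ^ (g - 1) * (2 ^ g + 1) := by
  have step1 : (Finset.univ.filter (fun p : (Fin g → ZMod 2) × (Fin g → ZMod 2) =>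
      ∑ i, p.1 i * p.2 i = 0)).card
      = ∑ x : Fin g → ZMod 2,
        (Finset.univ.filter (fun y : Fin g → ZMod 2 => ∑ i, x i * y i = 0)).card := by
    rw [Finset.card_filter, ← Finset.univ_product_univ, Finset.sum_product]
    exact Finset.sum_congr rfl fun x _ => (Finset.card_filter _ _).symm
  rw [step1, ← Finset.sum_erase_add _ _ (Finset.mem_univ (0 : Fin g → ZMod 2))]
  have h0 : (Finset.univ.filter
      (fun y : Fin g → ZMod 2 => ∑ i, (0 : Fin g → ZMod 2) i * y i = 0)).card = 2 ^ g := by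
    rw [Finset.filter_true_of_mem (fun y _ => by simp)]
    simp [Finset.card_univ]
  have herase : (∑ x ∈ Finset.univ.erase (0 : Fin g → ZMod 2),
      (Finset.univ.filter (fun y : Fin g → ZMod 2 => ∑ i, x i * y i = 0)).card)
      = (2 ^ g - 1) * 2 ^ (g - 1) := by
    rw [Finset.sum_congr rfl (fun x hx => fiber_ne g x (Finset.ne_of_mem_erase hx)),
      Finset.sum_const, smul_eq_mul, Finset.card_erase_of_mem (Finset.mem_univ _),
      Finset.card_univ]
    simp
  rw [h0, herase]
  have h2 : 2 ^ g = 2 * 2 ^ (g - 1) := by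
    nth_rewrite 1 [show g = (g - 1) + 1 from (Nat.succ_pred_eq_of_pos hg).symm]
    rw [pow_succ']
  rw [h2]
  exact key_arith _ (Nat.one_le_two_pow)

def Ncount (g : ℕ) (a : Fin (2 * g) → ℝ) : ℕ :=
  (Finset.univ.filter (fun i : Fin g => a (idxU i) = 1 / 2 ∧ a (idxL i) = 1 / 2)).card

lemma sum_eq (g : ℕ) (a : Fin (2 * g) → ℝ) (hp : ∀ k, a k = 0 ∨ a k = 1 / 2) :
    (∑ i, vecU a i * vecL a i) = (Ncount g a : ℝ) * (1 / 4) := by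
  have : (∑ i, vecU a i * vecL a i)
      = ∑ i ∈ Finset.univ.filter
          (fun i : Fin g => a (idxU i) = 1 / 2 ∧ a (idxL i) = 1 / 2), (1 / 4 : ℝ) := by
    rw [Finset.sum_filter]
    refine Finset.sum_congr rfl fun i _ => ?_
    rcases hp (idxU i) with h1 | h1 <;> rcases hp (idxL i) with h2 | h2 <;>
      simp [vecU, vecL, h1, h2] <;> norm_num
  rw [this, Finset.sum_const, Ncount, nsmul_eq_mul]

lemma exp_eq (g : ℕ) (a : Fin (2 * g) → ℝ) (hp : ∀ k, a k = 0 ∨ a k = 1 / 2) :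
    Complex.exp (4 * Real.pi * Complex.I * ((∑ i, vecU a i * vecL a i : ℝ) : ℂ))
      = (-1 : ℂ) ^ (Ncount g a) := by
  rw [sum_eq g a hp]
  push_cast
  rw [show (4 : ℂ) * Real.pi * Complex.I * ((Ncount g a : ℂ) * (1 / 4))
      = (Ncount g a : ℕ) * (Real.pi * Complex.I) by push_cast; ring]
  rw [Complex.exp_nat_mul, Complex.exp_pi_mul_I]

lemma mem_splus_iff (g : ℕ) (a : Fin (2 * g) → ℝ) :
    a ∈ Splus g ↔ (∀ k, a k = 0 ∨ a k = 1 / 2) ∧ Even (Ncount g a) := by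
  constructor
  · rintro ⟨hp, hnot⟩
    refine ⟨hp, ?_⟩
    rcases Nat.even_or_odd (Ncount g a) with h | h
    · exact h
    · exact absurd ⟨hp, by rw [exp_eq g a hp]; exact h.neg_one_pow⟩ hnot
  · rintro ⟨hp, heven⟩
    refine ⟨hp, fun hmem => ?_⟩
    have := hmem.2
    rw [exp_eq g a hp, heven.neg_one_pow] at this
    norm_num at this

def toZtwo (g : ℕ) (a : Fin (2 * g) → ℝ) : (Fin g → ZMod 2) × (Fin g → ZMod 2) :=
  (fun i => if a (idxU i) = 0 then 0 else 1, fun i => if a (idxL i) = 0 then 0 else 1)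

def ofZ (g : ℕ) (p : (Fin g → ZMod 2) × (Fin g → ZMod 2)) : Fin (2 * g) → ℝ :=
  fun k => if h : k.1 < g then (if p.1 ⟨k.1, h⟩ = 0 then 0 else 1 / 2)
           else (if p.2 ⟨k.1 - g, by have := k.isLt; omega⟩ = 0 then 0 else 1 / 2)

lemma zmod2_cases' (z : ZMod 2) : z = 0 ∨ z = 1 := by revert z; decide

lemma ofZ_prop (g : ℕ) (p : (Fin g → ZMod 2) × (Fin g → ZMod 2)) :
    ∀ k, ofZ g p k = 0 ∨ ofZ g p k = 1 / 2 := by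
  intro k
  unfold ofZ
  split <;> split <;> simp

lemma ofZ_idxU (g : ℕ) (p) (i : Fin g) :
    ofZ g p (idxU i) = if p.1 i = 0 then 0 else 1 / 2 := by
  unfold ofZ idxU
  rw [dif_pos i.isLt]

lemma ofZ_idxL (g : ℕ) (p) (i : Fin g) :
    ofZ g p (idxL i) = if p.2 i = 0 then 0 else 1 / 2 := by
  have hnlt : ¬ (idxL (g := g) i).1 < g := Nat.not_lt.mpr (Nat.le_add_right g i.1)
  unfold ofZ
  rw [dif_neg hnlt]
  have hi : (⟨(idxL (g := g) i).1 - g, by have := (idxL (g := g) i).isLt; omega⟩ : Fin g) = i := by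
    apply Fin.ext
    show g + i.1 - g = i.1
    omega
  rw [hi]

lemma toZtwo_ofZ (g : ℕ) (p : (Fin g → ZMod 2) × (Fin g → ZMod 2)) : toZtwo g (ofZ g p) = p := by
  refine Prod.ext ?_ ?_ <;> funext i
  · show (if ofZ g p (idxU i) = 0 then (0 : ZMod 2) else 1) = p.1 i
    rw [ofZ_idxU]
    rcases zmod2_cases' (p.1 i) with h | h <;> simp [h]
  · show (if ofZ g p (idxL i) = 0 then (0 : ZMod 2) else 1) = p.2 i
    rw [ofZ_idxL]
    rcases zmod2_cases' (p.2 i) with h | h <;> simp [h]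

lemma ofZ_toZtwo (g : ℕ) (a : Fin (2 * g) → ℝ) (hp : ∀ k, a k = 0 ∨ a k = 1 / 2) :
    ofZ g (toZtwo g a) = a := by
  funext k
  unfold ofZ
  by_cases h : k.1 < g
  · rw [dif_pos h]
    have hk : idxU (⟨k.1, h⟩ : Fin g) = k := by ext; simp [idxU]
    show (if (if a (idxU ⟨k.1, h⟩) = 0 then (0 : ZMod 2) else 1) = 0 then (0 : ℝ) else 1 / 2) = a k
    rw [hk]
    rcases hp k with h1 | h1 <;> simp [h1]
  · rw [dif_neg h]
    have hk : idxL (⟨k.1 - g, by have := k.isLt; omega⟩ : Fin g) = k := by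
      ext; simp [idxL]; omega
    show (if (if a (idxL ⟨k.1 - g, by have := k.isLt; omega⟩) = 0 then (0 : ZMod 2) else 1) = 0
        then (0 : ℝ) else 1 / 2) = a k
    rw [hk]
    rcases hp k with h1 | h1 <;> simp [h1]

lemma dot_toZtwo (g : ℕ) (a : Fin (2 * g) → ℝ) (hp : ∀ k, a k = 0 ∨ a k = 1 / 2) :
    (∑ i, (toZtwo g a).1 i * (toZtwo g a).2 i) = ((Ncount g a : ℕ) : ZMod 2) := by
  have key : ∀ i : Fin g, (toZtwo g a).1 i * (toZtwo g a).2 i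
      = if (a (idxU i) = 1 / 2 ∧ a (idxL i) = 1 / 2) then (1 : ZMod 2) else 0 := by
    intro i
    show (if a (idxU i) = 0 then (0 : ZMod 2) else 1) * (if a (idxL i) = 0 then (0 : ZMod 2) else 1)
        = _
    rcases hp (idxU i) with h1 | h1 <;> rcases hp (idxL i) with h2 | h2 <;>
      norm_num [h1, h2]
  rw [Finset.sum_congr rfl (fun i _ => key i), Finset.sum_boole]
  rfl

lemma mem_splus_iff' (g : ℕ) (a : Fin (2 * g) → ℝ) :
    a ∈ Splus g ↔ (∀ k, a k = 0 ∨ a k = 1 / 2)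
      ∧ (∑ i, (toZtwo g a).1 i * (toZtwo g a).2 i = 0) := by
  rw [mem_splus_iff]
  refine and_congr_right fun hp => ?_
  rw [dot_toZtwo g a hp, ZMod.natCast_eq_zero_iff]
  exact even_iff_two_dvd

theorem statement8 (g : ℕ) (hg : 1 ≤ g) :
    Nat.card (Splus g) = 2 ^ (g - 1) * (2 ^ g + 1) := by
  have e : ↥(Splus g) ≃ {p : (Fin g → ZMod 2) × (Fin g → ZMod 2) // ∑ i, p.1 i * p.2 i = 0} :=
    { toFun := fun a => ⟨toZtwo g a.1, ((mem_splus_iff' g a.1).mp a.2).2⟩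
      invFun := fun p => ⟨ofZ g p.1,
        (mem_splus_iff' g _).mpr ⟨ofZ_prop g p.1, by rw [toZtwo_ofZ]; exact p.2⟩⟩
      left_inv := fun a => Subtype.ext (ofZ_toZtwo g a.1 ((mem_splus_iff' g a.1).mp a.2).1)
      right_inv := fun p => Subtype.ext (toZtwo_ofZ g p.1) }
  rw [Nat.card_congr e, Nat.card_eq_fintype_card, Fintype.card_subtype]
  exact count_dot_zero g hg
end
end

section
/- Let g ≥ 1 be an integer. For every k ∈ {1,…,2g}, the number of a ∈ S_- whose k-th entry equals 0 is 2^{2g−2} − 2^{g−1}, and the number of a ∈ S_- whose k-th entry equals 1/2 is 2^{2g−2}. -/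
open Complex

noncomputable section

/-!
Writing `a = b / 2` with `b ∈ 𝔽₂^{2g}`, one has `exp (4πi a_u·a_l) = (-1)^{b_u·b_l}`, so `S₋`
corresponds to the pairs `(x, y) ∈ 𝔽₂^g × 𝔽₂^g` with `x ⬝ᵥ y = 1`. For `x ≠ 0` the linear form
`y ↦ x ⬝ᵥ y` is surjective, so its two fibres have `2^{g-1}` elements each, while `x = 0` pairs
oddly with nothing. Fixing one coordinate of `x` leaves `2^{g-1}` vectors `x`, one of which is `0`
when the prescribed value is `0`; by the symmetry of `⬝ᵥ` the same holds for a coordinate of `y`.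
-/

open Finset Matrix

theorem AddMonoidHom.card_fiber_mul_card_of_surjective {G H F : Type*} [AddGroup G] [Fintype G]
    [AddMonoid H] [Fintype H] [DecidableEq H] [FunLike F G H] [AddMonoidHomClass F G H]
    {f : F} (hf : Function.Surjective f) (c : H) :
    #{g | f g = c} * Fintype.card H = Fintype.card G := by
  calc #{g | f g = c} * Fintype.card H = ∑ h : H, #{g | f g = h} := by
        rw [sum_congr rfl fun h _ => card_fiber_eq_of_mem_range f (hf h) (hf c), sum_const,
          card_univ, smul_eq_mul, mul_comm]
    _ = Fintype.card G := (card_eq_sum_card_fiberwise fun _ _ => mem_univ _).symm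

section FiniteField

variable {K ι : Type*} [Fintype K] [DecidableEq K] [Fintype ι] [DecidableEq ι]

theorem card_filter_apply_eq (j : ι) (c : K) :
    #{x : ι → K | x j = c} = Fintype.card K ^ (Fintype.card ι - 1) := by
  simpa using Fintype.card_filter_piFinset_const_eq_of_mem (univ : Finset K) j (mem_univ c)

theorem card_filter_apply_eq_and_ne_zero [Zero K] (j : ι) (c : K) :
    #{x : ι → K | x j = c ∧ x ≠ 0} =
      Fintype.card K ^ (Fintype.card ι - 1) - if c = 0 then 1 else 0 := by
  split_ifs with hc
  · subst hc
    rw [← card_filter_apply_eq j (0 : K), ← card_erase_of_mem (a := 0) (by simp)]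
    congr 1; ext x; simp [and_comm]
  · rw [← card_filter_apply_eq j c, Nat.sub_zero]
    congr 1; ext x
    simp only [mem_filter, mem_univ, true_and, and_iff_left_iff_imp]
    rintro rfl rfl
    exact hc rfl

variable [Field K]

theorem card_filter_dotProduct_eq {x : ι → K} (hx : x ≠ 0) (d : K) :
    #{y : ι → K | x ⬝ᵥ y = d} = Fintype.card K ^ (Fintype.card ι - 1) := by
  obtain ⟨i, hi⟩ : ∃ i, x i ≠ 0 := Function.ne_iff.mp hx
  let f : (ι → K) →+ K := AddMonoidHom.mk' (x ⬝ᵥ ·) (dotProduct_add x)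
  have hf : Function.Surjective f := fun e =>
    ⟨Pi.single i ((x i)⁻¹ * e), by simp [f, dotProduct_single, hi]⟩
  refine Nat.eq_of_mul_eq_mul_right (Fintype.card_pos (α := K))
    ((AddMonoidHom.card_fiber_mul_card_of_surjective hf d).trans ?_)
  rw [Fintype.card_fun, ← pow_succ,
    Nat.sub_add_cancel (Fintype.card_pos_iff.2 ⟨i⟩ : 0 < Fintype.card ι)]

theorem card_filter_dotProduct_eq_and_fst_eq {d : K} (hd : d ≠ 0) (j : ι) (c : K) :
    #{p : (ι → K) × (ι → K) | p.1 ⬝ᵥ p.2 = d ∧ p.1 j = c} =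
      (Fintype.card K ^ (Fintype.card ι - 1) - if c = 0 then 1 else 0) *
        Fintype.card K ^ (Fintype.card ι - 1) := by
  have hfiber (x : ι → K) : #{y : ι → K | x ⬝ᵥ y = d ∧ x j = c} =
      if x j = c ∧ x ≠ 0 then Fintype.card K ^ (Fintype.card ι - 1) else 0 := by
    by_cases hxc : x j = c
    · by_cases hx : x = 0
      · subst hx; simp [hd.symm]
      · simp [hxc, hx, card_filter_dotProduct_eq hx]
    · simp [hxc]
  rw [← card_filter_apply_eq_and_ne_zero j c, card_filter, Fintype.sum_prod_type]
  simp only [← card_filter, hfiber]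
  rw [← sum_filter, sum_const, smul_eq_mul]

theorem card_filter_dotProduct_eq_and_snd_eq {d : K} (hd : d ≠ 0) (j : ι) (c : K) :
    #{p : (ι → K) × (ι → K) | p.1 ⬝ᵥ p.2 = d ∧ p.2 j = c} =
      (Fintype.card K ^ (Fintype.card ι - 1) - if c = 0 then 1 else 0) *
        Fintype.card K ^ (Fintype.card ι - 1) := by
  rw [← card_filter_dotProduct_eq_and_fst_eq hd j c]
  exact card_equiv (Equiv.prodComm _ _) (by simp [dotProduct_comm])

end FiniteField

def half (c : ZMod 2) : ℝ := c.val / 2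

theorem half_injective : Function.Injective half := fun a b h =>
  ZMod.val_injective 2 (by exact_mod_cast (div_left_inj' (two_ne_zero' ℝ)).1 h)

theorem half_eq_zero_or_eq_half (c : ZMod 2) : half c = 0 ∨ half c = 1 / 2 := by
  have : c.val = 0 ∨ c.val = 1 := by revert c; decide
  rcases this with h | h <;> simp [half, h]

theorem half_zero : half 0 = 0 := by simp [half]

theorem half_one : half 1 = 1 / 2 := by simp [half, ZMod.val_one]

theorem exists_half_eq {r : ℝ} (hr : r = 0 ∨ r = 1 / 2) : ∃ c, half c = r := by
  rcases hr with rfl | rfl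
  exacts [⟨0, half_zero⟩, ⟨1, half_one⟩]

theorem half_mul_half (a b : ZMod 2) : half a * half b = ((a * b).val : ℝ) / 4 := by
  have : (a * b).val = a.val * b.val := by revert a b; decide
  rw [half, half, this]
  push_cast
  ring

theorem exists_eq_idxU_or_idxL {g : ℕ} (k : Fin (2 * g)) :
    (∃ j, k = idxU j) ∨ ∃ j, k = idxL j := by
  by_cases hk : k.1 < g
  · exact .inl ⟨⟨k, hk⟩, rfl⟩
  · exact .inr ⟨⟨k - g, by omega⟩, Fin.ext (by simp [idxL]; omega)⟩

def toChar {g : ℕ} (p : (Fin g → ZMod 2) × (Fin g → ZMod 2)) : Fin (2 * g) → ℝ :=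
  fun k => half (Fin.append p.1 p.2 (k.cast (two_mul g)))

section toChar

variable {g : ℕ}

theorem toChar_idxU (p : (Fin g → ZMod 2) × (Fin g → ZMod 2)) (i : Fin g) :
    toChar p (idxU i) = half (p.1 i) := by
  rw [toChar, show (idxU i).cast (two_mul g) = Fin.castAdd g i from rfl, Fin.append_left]

theorem toChar_idxL (p : (Fin g → ZMod 2) × (Fin g → ZMod 2)) (i : Fin g) :
    toChar p (idxL i) = half (p.2 i) := by
  rw [toChar, show (idxL i).cast (two_mul g) = Fin.natAdd g i from rfl, Fin.append_right]

theorem toChar_injective : Function.Injective (toChar (g := g)) := fun p q h =>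
  Prod.ext (funext fun i => half_injective (by rw [← toChar_idxU, ← toChar_idxU, h]))
    (funext fun i => half_injective (by rw [← toChar_idxL, ← toChar_idxL, h]))

theorem toChar_restrict (b : Fin (2 * g) → ZMod 2) :
    toChar (fun i => b (idxU i), fun i => b (idxL i)) = fun k => half (b k) := by
  funext k
  rcases exists_eq_idxU_or_idxL k with ⟨j, rfl⟩ | ⟨j, rfl⟩
  exacts [toChar_idxU _ j, toChar_idxL _ j]

end toChar

theorem exp_four_pi_I_mul_div_four_eq_neg_one_iff (m : ℕ) :
    Complex.exp (4 * Real.pi * Complex.I * (((m : ℝ) / 4 : ℝ) : ℂ)) = -1 ↔ Odd m := by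
  have harg : 4 * (Real.pi : ℂ) * Complex.I * (((m : ℝ) / 4 : ℝ) : ℂ) =
      m * (Real.pi * Complex.I) := by
    push_cast
    ring
  rw [harg, Complex.exp_nat_mul, Complex.exp_pi_mul_I]
  exact neg_one_pow_eq_neg_one_iff_odd (by norm_num)

theorem toChar_mem_Sminus_iff {g : ℕ} (p : (Fin g → ZMod 2) × (Fin g → ZMod 2)) :
    toChar p ∈ Sminus g ↔ p.1 ⬝ᵥ p.2 = 1 := by
  have hsum : ∑ i, vecU (toChar p) i * vecL (toChar p) i =
      ((∑ i, (p.1 i * p.2 i).val : ℕ) : ℝ) / 4 := by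
    simp only [vecU, vecL, toChar_idxU, toChar_idxL, half_mul_half, Nat.cast_sum, sum_div]
  have hdot : ((∑ i, (p.1 i * p.2 i).val : ℕ) : ZMod 2) = p.1 ⬝ᵥ p.2 := by
    simp [dotProduct]
  rw [Sminus, Set.mem_ofPred_eq, hsum, exp_four_pi_I_mul_div_four_eq_neg_one_iff,
    ← ZMod.natCast_eq_one_iff_odd, hdot]
  exact and_iff_right fun k => half_eq_zero_or_eq_half _

theorem Sminus_eq_image_toChar (g : ℕ) : Sminus g = toChar '' {p | p.1 ⬝ᵥ p.2 = 1} := by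
  ext a
  constructor
  · intro ha
    choose b hb using fun k => exists_half_eq (ha.1 k)
    obtain rfl : toChar (fun i => b (idxU i), fun i => b (idxL i)) = a := by
      rw [toChar_restrict]; exact funext hb
    exact ⟨_, (toChar_mem_Sminus_iff _).1 ha, rfl⟩
  · rintro ⟨p, hp, rfl⟩
    exact (toChar_mem_Sminus_iff p).2 hp

theorem card_Sminus_and_apply_eq {g : ℕ} (k : Fin (2 * g)) (c : ZMod 2) :
    Nat.card {a | a ∈ Sminus g ∧ a k = half c} =
      (2 ^ (g - 1) - if c = 0 then 1 else 0) * 2 ^ (g - 1) := by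
  have hset : {a | a ∈ Sminus g ∧ a k = half c} =
      toChar '' {p | p.1 ⬝ᵥ p.2 = 1 ∧ toChar p k = half c} := by
    rw [Sminus_eq_image_toChar]
    ext a
    constructor
    · rintro ⟨⟨p, hp, rfl⟩, hk⟩
      exact ⟨p, ⟨hp, hk⟩, rfl⟩
    · rintro ⟨p, ⟨hp, hk⟩, rfl⟩
      exact ⟨⟨p, hp, rfl⟩, hk⟩
  rw [hset, Nat.card_image_of_injective toChar_injective, Set.coe_ofPred,
    Nat.card_eq_fintype_card, Fintype.card_subtype]
  rcases exists_eq_idxU_or_idxL k with ⟨j, rfl⟩ | ⟨j, rfl⟩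
  · simp only [toChar_idxU, half_injective.eq_iff]
    simpa using card_filter_dotProduct_eq_and_fst_eq one_ne_zero j c
  · simp only [toChar_idxL, half_injective.eq_iff]
    simpa using card_filter_dotProduct_eq_and_snd_eq one_ne_zero j c

theorem statement9_general (g : ℕ) (k : Fin (2 * g)) :
    Nat.card {a : Fin (2 * g) → ℝ | a ∈ Sminus g ∧ a k = 0} = 2 ^ (2 * g - 2) - 2 ^ (g - 1) ∧
      Nat.card {a : Fin (2 * g) → ℝ | a ∈ Sminus g ∧ a k = 1 / 2} = 2 ^ (2 * g - 2) := by
  have hpow : 2 ^ (2 * g - 2) = 2 ^ (g - 1) * 2 ^ (g - 1) := by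
    rw [← pow_add]; congr 1; omega
  rw [← half_zero, ← half_one, card_Sminus_and_apply_eq, card_Sminus_and_apply_eq,
    if_pos rfl, if_neg one_ne_zero, hpow, Nat.sub_zero, Nat.sub_mul, one_mul]
  exact ⟨rfl, rfl⟩

theorem statement9 (g : ℕ) (hg : 1 ≤ g) (k : Fin (2 * g)) :
    Nat.card {a : Fin (2 * g) → ℝ | a ∈ Sminus g ∧ a k = 0} = 2 ^ (2 * g - 2) - 2 ^ (g - 1) ∧
      Nat.card {a : Fin (2 * g) → ℝ | a ∈ Sminus g ∧ a k = 1 / 2} = 2 ^ (2 * g - 2) :=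
  statement9_general g k
end
end

section
/- Let g and N be positive integers, and let α be a 2g×2g matrix over ℤ/Nℤ belonging to the symplectic group Sp_{2g}(ℤ/Nℤ), i.e., satisfying αᵀ J α = J where J = [[O_g, −I_g],[I_g, O_g]]. Suppose that for each j ∈ {1,…,g} there exists ε_j ∈ {1, −1} ⊆ ℤ/Nℤ with αᵀ e_j = ε_j e_j, and that there exists ε ∈ {1, −1} ⊆ ℤ/Nℤ with αᵀ f = ε f, where f = e_1 + ⋯ + e_g. Then there exists a symmetric g×g matrix C over ℤ/Nℤ such that α = [[I_g, O_g],[C, I_g]] or α = −[[I_g, O_g],[C, I_g]] (in g×g block form). -/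
/-
The hypotheses say that the first `g` rows of `α` are `ε_j e_j`; evaluating `αᵀ f = ε f` at
`e_j` forces every `ε_j` to equal `ε`, so `α = [[ε I, 0], [C, D]]`. For such a block matrix
`αᵀ J α = [[ε (Cᵀ - C), -ε D], [ε Dᵀ, 0]]`, and since `ε² = 1` the symplectic condition
gives `D = ε I` and `Cᵀ = C`. Hence `α = ε [[I, 0], [ε C, I]]`.
-/

namespace Matrix

variable {l m n R : Type*} [CommRing R]

theorem transpose_mulVec_single_one [Fintype n] [DecidableEq n] (A : Matrix n n R) (i : n) :
    Aᵀ *ᵥ Pi.single i 1 = A i := by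
  rw [← vecMul_transpose, transpose_transpose, single_one_vecMul, row_def]

theorem eq_of_row_inl_eq_smul_single_of_transpose_mulVec_elim [Fintype m] [DecidableEq m]
    [Fintype n] [DecidableEq n] {A : Matrix (m ⊕ n) (m ⊕ n) R} {ε : R} {εs : m → R}
    (hrow : ∀ j, A (Sum.inl j) = εs j • Pi.single (Sum.inl j) 1)
    (hf : Aᵀ *ᵥ Sum.elim (fun _ => 1) (fun _ => 0) = ε • Sum.elim (fun _ => 1) (fun _ => 0))
    (k : m) : εs k = ε := by
  have hentry : ∀ j, A (Sum.inl j) (Sum.inl k) = εs j * if k = j then 1 else 0 := fun j => by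
    simp [hrow j, Pi.single_apply]
  simpa [mulVec, dotProduct, Fintype.sum_sum_type, hentry] using congrFun hf (Sum.inl k)

theorem eq_fromBlocks_of_row_inl_eq_smul_single [DecidableEq m] [DecidableEq n]
    {A : Matrix (m ⊕ n) (m ⊕ n) R} {ε : R}
    (hrow : ∀ j, A (Sum.inl j) = ε • Pi.single (Sum.inl j) 1) :
    A = fromBlocks (ε • 1) 0 A.toBlocks₂₁ A.toBlocks₂₂ := by
  conv_lhs => rw [← fromBlocks_toBlocks A]
  congr 1 <;> ext i j <;>
    simp [toBlocks₁₁, toBlocks₁₂, hrow i, Pi.single_apply, one_apply, eq_comm]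

theorem fromBlocks_smul_one_zero_smul_one [DecidableEq l] {ε : R} (hε : ε * ε = 1)
    (C : Matrix l l R) :
    fromBlocks (ε • 1) (0 : Matrix l l R) C (ε • 1) =
      ε • fromBlocks 1 (0 : Matrix l l R) (ε • C) 1 := by
  rw [fromBlocks_smul, smul_zero, smul_smul, hε, one_smul]

variable [Fintype l] [DecidableEq l]

theorem fromBlocks_transpose_mul_J_mul_fromBlocks (ε : R) (C D : Matrix l l R) :
    (fromBlocks (ε • 1) 0 C D)ᵀ * J l R * fromBlocks (ε • 1) 0 C D =
      fromBlocks (ε • (Cᵀ - C)) (-(ε • D)) (ε • Dᵀ) 0 := by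
  simp [J, fromBlocks_transpose, fromBlocks_multiply, sub_eq_add_neg]

theorem isSymm_and_eq_smul_one_of_fromBlocks_mem_symplecticGroup {ε : R} (hε : ε * ε = 1)
    {C D : Matrix l l R} (h : fromBlocks (ε • 1) 0 C D ∈ symplecticGroup l R) :
    C.IsSymm ∧ D = ε • 1 := by
  rw [SymplecticGroup.mem_iff', fromBlocks_transpose_mul_J_mul_fromBlocks, J,
    fromBlocks_inj] at h
  obtain ⟨hC, hD, -, -⟩ := h
  have hcancel : ∀ X : Matrix l l R, ε • ε • X = X := fun X => by
    rw [smul_smul, hε, one_smul]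
  refine ⟨?_, ?_⟩
  · rw [IsSymm, ← sub_eq_zero, ← hcancel (Cᵀ - C), hC, smul_zero]
  · rw [← hcancel D, neg_inj.mp hD]

end Matrix

open Matrix

theorem statement12_general (g N : ℕ)
    (α : Matrix (Fin g ⊕ Fin g) (Fin g ⊕ Fin g) (ZMod N))
    (hsp : αᵀ * Matrix.fromBlocks 0 (-1) 1 0 * α = Matrix.fromBlocks 0 (-1) 1 0)
    (hj : ∀ j : Fin g, ∃ ε : ZMod N, (ε = 1 ∨ ε = -1) ∧
      αᵀ.mulVec (Pi.single (Sum.inl j) 1 : Fin g ⊕ Fin g → ZMod N) =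
        ε • (Pi.single (Sum.inl j) 1 : Fin g ⊕ Fin g → ZMod N))
    (hf : ∃ ε : ZMod N, (ε = 1 ∨ ε = -1) ∧
      αᵀ.mulVec (Sum.elim (fun _ => (1 : ZMod N)) fun _ => 0) =
        ε • Sum.elim (fun _ => (1 : ZMod N)) fun _ => 0) :
    ∃ C : Matrix (Fin g) (Fin g) (ZMod N), C.IsSymm ∧
      (α = Matrix.fromBlocks 1 0 C 1 ∨ α = -Matrix.fromBlocks 1 0 C 1) := by
  obtain ⟨ε, hε, hfε⟩ := hf
  choose εs _ hεs using hj
  simp only [transpose_mulVec_single_one] at hεs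
  have hrow : ∀ j, α (Sum.inl j) = ε • Pi.single (Sum.inl j) 1 := fun j => by
    rw [hεs, eq_of_row_inl_eq_smul_single_of_transpose_mulVec_elim hεs hfε]
  have hε2 : ε * ε = 1 := by rcases hε with rfl | rfl <;> norm_num
  have hblocks := eq_fromBlocks_of_row_inl_eq_smul_single hrow
  obtain ⟨hC, hD⟩ := isSymm_and_eq_smul_one_of_fromBlocks_mem_symplecticGroup hε2
    (hblocks ▸ SymplecticGroup.mem_iff'.mpr hsp)
  rw [hD, fromBlocks_smul_one_zero_smul_one hε2] at hblocks
  refine ⟨ε • α.toBlocks₂₁, hC.smul ε, ?_⟩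
  rcases hε with rfl | rfl
  · exact .inl (hblocks.trans (one_smul _ _))
  · exact .inr (hblocks.trans (neg_one_smul _ _))

theorem statement12 (g N : ℕ) (hg : 0 < g) (hN : 0 < N)
    (α : Matrix (Fin g ⊕ Fin g) (Fin g ⊕ Fin g) (ZMod N))
    (hsp : αᵀ * Matrix.fromBlocks 0 (-1) 1 0 * α = Matrix.fromBlocks 0 (-1) 1 0)
    (hj : ∀ j : Fin g, ∃ ε : ZMod N, (ε = 1 ∨ ε = -1) ∧
      αᵀ.mulVec (Pi.single (Sum.inl j) 1 : Fin g ⊕ Fin g → ZMod N) =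
        ε • (Pi.single (Sum.inl j) 1 : Fin g ⊕ Fin g → ZMod N))
    (hf : ∃ ε : ZMod N, (ε = 1 ∨ ε = -1) ∧
      αᵀ.mulVec (Sum.elim (fun _ => (1 : ZMod N)) fun _ => 0) =
        ε • Sum.elim (fun _ => (1 : ZMod N)) fun _ => 0) :
    ∃ C : Matrix (Fin g) (Fin g) (ZMod N), C.IsSymm ∧
      (α = Matrix.fromBlocks 1 0 C 1 ∨ α = -Matrix.fromBlocks 1 0 C 1) :=
  statement12_general g N α hsp hj hf
end

section
/- Let g ≥ 2 be an integer and N a positive integer such that 2^g − 1 does not divide N. Let v, v' be rational numbers with 0 ≤ v < 1/2, 0 ≤ v' < 1/2, and Nv, Nv' ∈ ℤ. If n_0·B_2(1/2 + v) + n_{1/2}·B_2(v) = n_0·B_2(1/2 + v') + n_{1/2}·B_2(v'), then v = v'. -/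
/-- The second Bernoulli polynomial `B₂(x) = x² - x + 1/6`. -/
def B2 (x : ℚ) : ℚ := x ^ 2 - x + 1 / 6

/-- `n₀ = 2^{2g-2} - 2^{g-1}`. -/
def nZero (g : ℕ) : ℚ := 2 ^ (2 * g - 2) - 2 ^ (g - 1)

/-- `n_{1/2} = 2^{2g-2}`. -/
def nHalf (g : ℕ) : ℚ := 2 ^ (2 * g - 2)

theorem statement15 (g N : ℕ) (hg : 2 ≤ g) (hN : 0 < N) (hdvd : ¬ (2 ^ g - 1 ∣ N))
    (v v' : ℚ) (hv0 : 0 ≤ v) (hv1 : v < 1 / 2) (hv'0 : 0 ≤ v') (hv'1 : v' < 1 / 2)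
    (hvZ : ∃ z : ℤ, (N : ℚ) * v = z) (hv'Z : ∃ z : ℤ, (N : ℚ) * v' = z)
    (heq : nZero g * B2 (1 / 2 + v) + nHalf g * B2 v =
      nZero g * B2 (1 / 2 + v') + nHalf g * B2 v') :
    v = v' := by
  obtain ⟨k, rfl⟩ : ∃ k, g = k + 2 := ⟨g - 2, by omega⟩
  obtain ⟨z, hz⟩ := hvZ
  obtain ⟨z', hz'⟩ := hv'Z
  by_contra hne
  have key : (v - v') * ((nZero (k+2) + nHalf (k+2)) * (v + v') - nHalf (k+2)) = 0 := by
    simp only [B2] at heq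
    linear_combination heq
  have hsum : (nZero (k+2) + nHalf (k+2)) * (v + v') = nHalf (k+2) := by
    rcases mul_eq_zero.mp key with h | h
    · exact absurd (by linarith) hne
    · linarith
  have h1 : nZero (k+2) = (2:ℚ)^(2*k+2) - 2^(k+1) := by
    unfold nZero
    rw [show 2*(k+2)-2 = 2*k+2 by omega, show (k+2)-1 = k+1 by omega]
  have h2 : nHalf (k+2) = (2:ℚ)^(2*k+2) := by
    unfold nHalf
    rw [show 2*(k+2)-2 = 2*k+2 by omega]
  rw [h1, h2] at hsum
  have hQ : ((2:ℚ)^(2*k+2) - 2^(k+1) + 2^(2*k+2)) * ((z:ℚ) + (z':ℚ))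
      = (N:ℚ) * 2^(2*k+2) := by
    linear_combination (N:ℚ) * hsum - ((2:ℚ)^(2*k+2) - 2^(k+1) + 2^(2*k+2)) * hz
      - ((2:ℚ)^(2*k+2) - 2^(k+1) + 2^(2*k+2)) * hz'
  have hZ : ((2:ℤ)^(2*k+2) - 2^(k+1) + 2^(2*k+2)) * (z + z') = (N:ℤ) * 2^(2*k+2) := by
    exact_mod_cast hQ
  have hfac : ((2:ℤ)^(k+2) - 1) * (z + z') = (N:ℤ) * 2^(k+1) := by
    have h2 : (2:ℤ)^(k+1) ≠ 0 := by positivity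
    apply mul_left_cancel₀ h2
    linear_combination hZ
  have hdvdZ : ((2:ℤ)^(k+2) - 1) ∣ (N:ℤ) * 2^(k+1) := ⟨z + z', hfac.symm⟩
  have hdvdN : ((2:ℕ)^(k+2) - 1) ∣ N * 2^(k+1) := by
    have hcast : ((2:ℤ)^(k+2) - 1) = (((2:ℕ)^(k+2) - 1 : ℕ) : ℤ) := by
      have : 1 ≤ (2:ℕ)^(k+2) := Nat.one_le_two_pow
      push_cast [this]
      ring
    rw [hcast] at hdvdZ
    exact_mod_cast hdvdZ
  have hcop : Nat.Coprime ((2:ℕ)^(k+2) - 1) (2^(k+1)) := by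
    apply Nat.Coprime.pow_right
    apply Odd.coprime_two_right
    have h4 : 4 ≤ (2:ℕ)^(k+2) := by
      calc (4:ℕ) = 2^2 := rfl
      _ ≤ 2^(k+2) := Nat.pow_le_pow_right (by norm_num) (by omega)
    have : (2:ℕ)^(k+2) % 2 = 0 := by
      simp [Nat.pow_mod]
    refine ⟨(2^(k+2) - 2)/2, by omega⟩
  exact hdvd (hcop.dvd_of_dvd_mul_right hdvdN)
end

section
/- Let g ≥ 2 be an integer and N a positive integer such that 2^g − 1 does not divide N. Let v, v' be rational numbers with 0 ≤ v < 1/2, 1/2 ≤ v' < 1, and Nv, Nv' ∈ ℤ. If n_0·B_2(1/2 + v) + n_{1/2}·B_2(v) = n_0·B_2(−1/2 + v') + n_{1/2}·B_2(v'), then v = 1 − v'. -/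
theorem statement16 (g N : ℕ) (hg : 2 ≤ g) (hN : 0 < N) (hdvd : ¬ (2 ^ g - 1 ∣ N))
    (v v' : ℚ) (hv0 : 0 ≤ v) (hv1 : v < 1 / 2) (hv'0 : 1 / 2 ≤ v') (hv'1 : v' < 1)
    (hvZ : ∃ z : ℤ, (N : ℚ) * v = z) (hv'Z : ∃ z : ℤ, (N : ℚ) * v' = z)
    (heq : nZero g * B2 (1 / 2 + v) + nHalf g * B2 v =
      nZero g * B2 (-(1 / 2) + v') + nHalf g * B2 v') :
    v = 1 - v' := by
  obtain ⟨k, rfl⟩ : ∃ k, g = k + 2 := ⟨g - 2, by omega⟩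
  obtain ⟨z, hz⟩ := hvZ
  obtain ⟨z', hz'⟩ := hv'Z
  set x : ℚ := 2 ^ (k + 1) with hx
  have hxpos : (0:ℚ) < x := by positivity
  have hn0 : nZero (k + 2) = x ^ 2 - x := by
    rw [nZero, hx, ← pow_mul]
    congr 2
    omega
  have hnh : nHalf (k + 2) = x ^ 2 := by
    rw [nHalf, hx, ← pow_mul]
    congr 1
    omega
  rw [hn0, hnh] at heq
  simp only [B2] at heq
  have key : x * ((v - (1 - v')) * ((2 * x - 1) * (v + (1 - v')) - x)) = 0 := by
    linear_combination heq
  rcases mul_eq_zero.mp key with h | h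
  · exact absurd h (ne_of_gt hxpos)
  rcases mul_eq_zero.mp h with h | h
  · linarith
  · exfalso
    have h2 : (2 * x - 1) * (v + (1 - v')) = x := by linarith
    have hq : (2 * x - 1) * ((z : ℚ) + N - z') = N * x := by
      rw [← hz, ← hz']
      linear_combination (N : ℚ) * h2
    have hZ : ((2 : ℤ) ^ (k + 2) - 1) * (z + N - z') = N * 2 ^ (k + 1) := by
      have : ((2 : ℚ) ^ (k + 2) - 1) * ((z : ℚ) + N - z') = N * 2 ^ (k + 1) := by
        rw [pow_succ]
        linear_combination hq
      exact_mod_cast this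
    have hdvdZ : ((2 : ℤ) ^ (k + 2) - 1) ∣ (N : ℤ) * 2 ^ (k + 1) := ⟨_, hZ.symm⟩
    have hone : 1 ≤ 2 ^ (k + 2) := Nat.one_le_two_pow
    have hdvdN : (2 ^ (k + 2) - 1 : ℕ) ∣ N * 2 ^ (k + 1) := by
      have : ((2 ^ (k + 2) - 1 : ℕ) : ℤ) ∣ ((N * 2 ^ (k + 1) : ℕ) : ℤ) := by
        push_cast [hone]
        exact hdvdZ
      exact_mod_cast this
    have hcop : Nat.Coprime (2 ^ (k + 2) - 1) (2 ^ (k + 1)) := by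
      apply Nat.Coprime.pow_right
      rw [Nat.coprime_two_right, Nat.odd_iff]
      have h2p : 2 ∣ 2 ^ (k + 2) := dvd_pow_self 2 (by omega)
      omega
    exact hdvd (hcop.dvd_of_dvd_mul_right hdvdN)
end

section
/- Let g ≥ 2 be an integer and N a positive integer such that 2^g − 1 does not divide N. Let v, v' be rational numbers with 1/2 ≤ v < 1, 1/2 ≤ v' < 1, and Nv, Nv' ∈ ℤ. If n_0·B_2(−1/2 + v) + n_{1/2}·B_2(v) = n_0·B_2(−1/2 + v') + n_{1/2}·B_2(v'), then v = v'. -/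
theorem statement17 (g N : ℕ) (hg : 2 ≤ g) (hN : 0 < N) (hdvd : ¬ (2 ^ g - 1 ∣ N))
    (v v' : ℚ) (hv0 : 1 / 2 ≤ v) (hv1 : v < 1) (hv'0 : 1 / 2 ≤ v') (hv'1 : v' < 1)
    (hvZ : ∃ z : ℤ, (N : ℚ) * v = z) (hv'Z : ∃ z : ℤ, (N : ℚ) * v' = z)
    (heq : nZero g * B2 (-(1 / 2) + v) + nHalf g * B2 v =
      nZero g * B2 (-(1 / 2) + v') + nHalf g * B2 v') :
    v = v' := by
  obtain ⟨k, rfl⟩ : ∃ k, g = k + 2 := ⟨g - 2, by omega⟩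
  obtain ⟨z, hz⟩ := hvZ
  obtain ⟨z', hz'⟩ := hv'Z
  by_contra hne
  set A : ℚ := 2 ^ k with hA
  have hA1 : (1 : ℚ) ≤ A := one_le_pow₀ (by norm_num)
  have hn0 : nZero (k + 2) = 4 * A ^ 2 - 2 * A := by
    simp only [nZero, hA]
    rw [show 2 * (k + 2) - 2 = 2 * k + 2 by omega, show (k + 2) - 1 = k + 1 by omega]
    ring
  have hnh : nHalf (k + 2) = 4 * A ^ 2 := by
    simp only [nHalf, hA]
    rw [show 2 * (k + 2) - 2 = 2 * k + 2 by omega]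
    ring
  rw [hn0, hnh] at heq
  simp only [B2] at heq
  have hfac : (v - v') * ((8 * A ^ 2 - 2 * A) * (v + v' - 1) - (4 * A ^ 2 - 2 * A)) = 0 := by
    linear_combination heq
  have h2 : (8 * A ^ 2 - 2 * A) * (v + v' - 1) - (4 * A ^ 2 - 2 * A) = 0 := by
    rcases mul_eq_zero.mp hfac with h | h
    · exact absurd (sub_eq_zero.mp h) hne
    · exact h
  have hAne : (2 * A : ℚ) ≠ 0 := by positivity
  have h3 : (4 * A - 1) * (v + v' - 1) = 2 * A - 1 :=
    mul_left_cancel₀ hAne (by linear_combination h2)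
  have hsum : (4 * A - 1) * (v + v') = 6 * A - 2 := by linear_combination h3
  have hint : ((z + z' : ℤ) : ℚ) * (4 * A - 1) = (N : ℚ) * (6 * A - 2) := by
    push_cast
    rw [← hz, ← hz']
    linear_combination (N : ℚ) * hsum
  have hZint : (z + z') * (4 * 2 ^ k - 1) = (N : ℤ) * (6 * 2 ^ k - 2) := by
    have h : (((z + z') * (4 * 2 ^ k - 1) : ℤ) : ℚ) = (((N : ℤ) * (6 * 2 ^ k - 2) : ℤ) : ℚ) := by
      push_cast at hint ⊢
      linear_combination hint
    exact_mod_cast h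
  have hcop : IsCoprime ((4 * 2 ^ k - 1 : ℤ)) (6 * 2 ^ k - 2) := ⟨3, -2, by ring⟩
  have hdvdN : (4 * 2 ^ k - 1 : ℤ) ∣ (N : ℤ) :=
    hcop.dvd_of_dvd_mul_right ⟨z + z', by linarith [hZint]⟩
  apply hdvd
  have h1 : (1 : ℕ) ≤ 2 ^ (k + 2) := Nat.one_le_two_pow
  have hcast : ((2 ^ (k + 2) - 1 : ℕ) : ℤ) = 4 * 2 ^ k - 1 := by
    push_cast [h1]
    ring
  rw [← Int.natCast_dvd_natCast, hcast]
  exact hdvdN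
end

section
/- Let g ≥ 2 be an integer and N ≥ 3 an integer. Let v be a rational number with 0 ≤ v < 1/2 and Nv ∈ ℤ. If n_0·B_2(1/2 + v) + n_{1/2}·B_2(v) = n_0·B_2(1/2 + 1/N) + n_{1/2}·B_2(1/N), then v = 1/N or v = 2^{g−1}/(2^g − 1) − 1/N. -/
theorem statement18 (g N : ℕ) (hg : 2 ≤ g) (hN : 3 ≤ N)
    (v : ℚ) (hv0 : 0 ≤ v) (hv1 : v < 1 / 2) (hvZ : ∃ z : ℤ, (N : ℚ) * v = z)
    (heq : nZero g * B2 (1 / 2 + v) + nHalf g * B2 v =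
      nZero g * B2 (1 / 2 + 1 / (N : ℚ)) + nHalf g * B2 (1 / (N : ℚ))) :
    v = 1 / (N : ℚ) ∨ v = (2 : ℚ) ^ (g - 1) / ((2 : ℚ) ^ g - 1) - 1 / (N : ℚ) := by
  obtain ⟨k, rfl⟩ := Nat.exists_eq_add_of_le hg
  have e1 : 2 * (2 + k) - 2 = 2 * k + 2 := by omega
  have e2 : 2 + k - 1 = k + 1 := by omega
  simp only [nZero, nHalf, B2, e1, e2] at heq ⊢
  have h1 : (2:ℚ) ^ (2 * k + 2) = 4 * ((2:ℚ) ^ k) ^ 2 := by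
    rw [pow_add, two_mul, pow_add]; ring
  have h2 : (2:ℚ) ^ (k + 1) = 2 * (2:ℚ) ^ k := by rw [pow_succ]; ring
  have h3 : (2:ℚ) ^ (2 + k) = 4 * (2:ℚ) ^ k := by rw [pow_add]; norm_num
  have hx1 : (1:ℚ) ≤ (2:ℚ) ^ k := one_le_pow₀ (by norm_num)
  have key : (v - 1 / (N:ℚ)) *
      ((8 * ((2:ℚ) ^ k) ^ 2 - 2 * (2:ℚ) ^ k) * (v + 1 / (N:ℚ))
        - 4 * ((2:ℚ) ^ k) ^ 2) = 0 := by
    rw [h1, h2] at heq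
    linear_combination heq
  rcases mul_eq_zero.mp key with h | h
  · left; linarith
  · right
    rw [h2, h3]
    have hd : (4 * (2:ℚ) ^ k - 1) ≠ 0 := by nlinarith
    have hx0 : (2:ℚ) ^ k ≠ 0 := by positivity
    rw [eq_sub_iff_add_eq, eq_div_iff hd]
    have h' : (2 * (2:ℚ) ^ k) * ((v + 1 / (N:ℚ)) * (4 * (2:ℚ) ^ k - 1)) =
        (2 * (2:ℚ) ^ k) * (2 * (2:ℚ) ^ k) := by linear_combination h
    exact mul_left_cancel₀ (by positivity) h'
end

section
/- Let g ≥ 2 be an integer and N ≥ 3 an integer. Let v be a rational number with 1/2 ≤ v < 1 and Nv ∈ ℤ. If n_0·B_2(−1/2 + v) + n_{1/2}·B_2(v) = n_0·B_2(1/2 + 1/N) + n_{1/2}·B_2(1/N), then v = 1 − 1/N or v = (2^{g−1} − 1)/(2^g − 1) + 1/N. -/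
theorem statement19 (g N : ℕ) (hg : 2 ≤ g) (hN : 3 ≤ N)
    (v : ℚ) (hv0 : 1 / 2 ≤ v) (hv1 : v < 1) (hvZ : ∃ z : ℤ, (N : ℚ) * v = z)
    (heq : nZero g * B2 (-(1 / 2) + v) + nHalf g * B2 v =
      nZero g * B2 (1 / 2 + 1 / (N : ℚ)) + nHalf g * B2 (1 / (N : ℚ))) :
    v = 1 - 1 / (N : ℚ) ∨
      v = ((2 : ℚ) ^ (g - 1) - 1) / ((2 : ℚ) ^ g - 1) + 1 / (N : ℚ) := by
  obtain ⟨k, rfl⟩ : ∃ k, g = k + 2 := ⟨g - 2, by omega⟩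
  have hN0 : (N : ℚ) ≠ 0 := Nat.cast_ne_zero.mpr (by omega)
  set t : ℚ := 2 ^ k with ht
  have ht1 : (1 : ℚ) ≤ t := one_le_pow₀ (by norm_num)
  have ht0 : t ≠ 0 := by linarith
  have h4t : 4 * t - 1 ≠ 0 := by intro h; linarith [ht1]
  have e1 : 2 * (k + 2) - 2 = 2 * k + 2 := by omega
  have e2 : (k + 2) - 1 = k + 1 := by omega
  have hp1 : (2 : ℚ) ^ (2 * k + 2) = 4 * t ^ 2 := by
    rw [ht, show 2 * k + 2 = k + k + 2 by ring, pow_add, pow_add]; ring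
  have hp2 : (2 : ℚ) ^ (k + 1) = 2 * t := by rw [ht, pow_succ, mul_comm]
  have hp3 : (2 : ℚ) ^ (k + 2) = 4 * t := by rw [ht, pow_add]; ring
  unfold nZero nHalf B2 at heq
  rw [e1, e2, hp1, hp2] at heq
  have key : (2 * t) * ((4 * t - 1) *
      ((v - (1 - 1 / (N : ℚ))) * (v - ((2 * t - 1) / (4 * t - 1) + 1 / (N : ℚ))))) = 0 := by
    have hq : (2 * t - 1) / (4 * t - 1) * (4 * t - 1) = 2 * t - 1 :=
      div_mul_cancel₀ _ h4t
    linear_combination heq + (2 * t * (1 - 1 / (N : ℚ) - v)) * hq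
  rcases mul_eq_zero.mp key with h | h
  · exact absurd h (by intro h'; linarith)
  rcases mul_eq_zero.mp h with h | h
  · exact absurd h h4t
  rcases mul_eq_zero.mp h with h | h
  · left; linarith [sub_eq_zero.mp h]
  · right
    rw [e2, hp2, hp3]
    have := sub_eq_zero.mp h
    linarith
end
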